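/- arXiv:2402.18704 — 13 statements merged into one kernel-verified Lean document; each statement's English description precedes it below -/
import Mathlib

section
/- Every nonzero sdf-absorbing ideal of a commutative ring is a radical ideal. -/
/-! If `x² ∈ I` and `c ∈ I` is nonzero, then `x² - c² ∈ I`, so `x + c ∈ I` or
`x - c ∈ I`; either way `x ∈ I`. An ideal closed under square roots is radical. -/

/-- A proper ideal `I` is sdf-absorbing if whenever `a^2 - b^2 ∈ I` for nonzero
`a, b`, then `a + b ∈ I` or `a - b ∈ I`. -/
def IsSdfAbsorbing {R : Type*} [CommRing R] (I : Ideal R) : Prop :=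
  I ≠ ⊤ ∧ ∀ a b : R, a ≠ 0 → b ≠ 0 → a ^ 2 - b ^ 2 ∈ I → a + b ∈ I ∨ a - b ∈ I

theorem IsSdfAbsorbing.mem_of_sq_mem {R : Type*} [CommRing R] {I : Ideal R}
    (hI : IsSdfAbsorbing I) (hI0 : I ≠ ⊥) {x : R} (hx : x ^ 2 ∈ I) : x ∈ I := by
  obtain ⟨c, hcI, hc0⟩ := (Submodule.ne_bot_iff I).mp hI0
  by_cases hx0 : x = 0
  · exact hx0 ▸ I.zero_mem
  have hdiff : x ^ 2 - c ^ 2 ∈ I := I.sub_mem hx (I.pow_mem_of_mem hcI 2 two_pos)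
  rcases hI.2 x c hx0 hc0 hdiff with h | h
  · simpa using I.sub_mem h hcI
  · simpa using I.add_mem h hcI

theorem stmt0_general {R : Type*} [CommRing R] (I : Ideal R) (hI0 : I ≠ ⊥)
    (hI : IsSdfAbsorbing I) : I.IsRadical :=
  (I.isRadical_iff_pow_one_lt 2 one_lt_two).mpr fun _ ↦ hI.mem_of_sq_mem hI0

theorem stmt0 {R : Type*} [CommRing R] [Nontrivial R] (I : Ideal R) (hI0 : I ≠ ⊥)
    (hI : IsSdfAbsorbing I) : I.IsRadical :=
  stmt0_general I hI0 hI
end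

section
/- Let I be an sdf-absorbing ideal of a commutative ring R. Then the following are equivalent: (a) whenever a² − b² ∈ I for nonzero a, b ∈ R, both a + b ∈ I and a − b ∈ I; (b) 2 ∈ I. -/
theorem Ideal.add_mem_iff_sub_mem_of_two_mem {R : Type*} [Ring R] {I : Ideal R}
    (h2 : (2 : R) ∈ I) (a b : R) : a + b ∈ I ↔ a - b ∈ I := by
  rw [show a + b = a - b + b * 2 by noncomm_ring, I.add_mem_iff_left (I.mul_mem_left b h2)]

theorem stmt2 {R : Type*} [CommRing R] [Nontrivial R] (I : Ideal R)
    (hI : IsSdfAbsorbing I) :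
    (∀ a b : R, a ≠ 0 → b ≠ 0 → a ^ 2 - b ^ 2 ∈ I → a + b ∈ I ∧ a - b ∈ I) ↔
      (2 : R) ∈ I := by
  constructor
  · intro h
    simpa [one_add_one_eq_two] using (h 1 1 one_ne_zero one_ne_zero (by simp)).1
  · intro h2 a b ha hb hab
    have hiff := I.add_mem_iff_sub_mem_of_two_mem h2 a b
    rw [hiff, and_self]
    exact (hI.2 a b ha hb hab).elim hiff.1 id
end

section
/- Let R be a commutative ring in which 2 is a unit. Then every nonzero sdf-absorbing ideal of R is a prime ideal. -/
namespace IsSdfAbsorbing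

variable {R : Type*} [CommRing R] {I : Ideal R}

theorem mem_of_sq_mem_s3 (hI0 : I ≠ ⊥) (hI : IsSdfAbsorbing I) {x : R} (hx2 : x ^ 2 ∈ I) :
    x ∈ I := by
  by_cases hx : x = 0
  · simp [hx]
  obtain ⟨c, hcI, hc⟩ := Submodule.exists_mem_ne_zero_of_ne_bot hI0
  have hc2 : c ^ 2 ∈ I := Ideal.pow_mem_of_mem I hcI 2 two_pos
  rcases hI.2 x c hx hc (I.sub_mem hx2 hc2) with hsum | hdiff
  · simpa using I.sub_mem hsum hcI
  · simpa using I.add_mem hdiff hcI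

theorem add_mem_or_sub_mem (hI0 : I ≠ ⊥) (hI : IsSdfAbsorbing I) {a b : R}
    (hab : a ^ 2 - b ^ 2 ∈ I) : a + b ∈ I ∨ a - b ∈ I := by
  by_cases ha : a = 0
  · have hb : b ∈ I := hI.mem_of_sq_mem_s3 hI0 (by simpa [ha] using I.neg_mem hab)
    simp [ha, hb]
  by_cases hb : b = 0
  · have ha' : a ∈ I := hI.mem_of_sq_mem_s3 hI0 (by simpa [hb] using hab)
    simpa [hb] using ha'
  exact hI.2 a b ha hb hab

end IsSdfAbsorbing

theorem stmt3_general {R : Type*} [CommRing R] (h2 : IsUnit (2 : R))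
    (I : Ideal R) (hI0 : I ≠ ⊥) (hI : IsSdfAbsorbing I) : I.IsPrime := by
  refine Ideal.isPrime_iff.mpr ⟨hI.1, fun {x y} hxy => ?_⟩
  obtain ⟨u, hu⟩ := h2.exists_right_inv
  have hsq : (u * (x + y)) ^ 2 - (u * (x - y)) ^ 2 = x * y := by
    linear_combination (2 * u + 1) * x * y * hu
  have hsum : u * (x + y) + u * (x - y) = x := by linear_combination x * hu
  have hdiff : u * (x + y) - u * (x - y) = y := by linear_combination y * hu
  rw [← hsq] at hxy
  simpa only [hsum, hdiff] using hI.add_mem_or_sub_mem hI0 hxy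

theorem stmt3 {R : Type*} [CommRing R] [Nontrivial R] (h2 : IsUnit (2 : R))
    (I : Ideal R) (hI0 : I ≠ ⊥) (hI : IsSdfAbsorbing I) : I.IsPrime :=
  stmt3_general h2 I hI0 hI
end

section
/- A proper ideal I of ℤ is sdf-absorbing if and only if I is a prime ideal of ℤ or I = 2qℤ for some odd prime q. -/
/-!
Since `a² - b² = (a + b)(a - b)`, prime ideals are sdf-absorbing, and so is `2qℤ` for an odd
prime `q`: `a + b` and `a - b` have the same parity, hence are both even, and `q` divides one of
them.

Conversely, if `x + y` is even then `x y = a² - b²` with `a + b = x`, `a - b = y`, so an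
sdf-absorbing `nℤ` contains `x` or `y` as soon as `x ≠ ±y`. If `n ≥ 2` is neither prime nor twice
an odd prime, there are `d, e ∈ (0, n)` of the same parity with `n ∣ d e`: two odd factors of `n`,
or `2` and `n / 2` when `4 ∣ n`, or `2u` and `2v` when `n = 2uv` with `uv` odd and composite.
-/

theorem Ideal.IsPrime.isSdfAbsorbing {R : Type*} [CommRing R] {I : Ideal R} (hI : I.IsPrime) :
    IsSdfAbsorbing I :=
  ⟨hI.ne_top, fun a b _ _ hab => hI.mem_or_mem (by rwa [← sq_sub_sq])⟩

theorem isSdfAbsorbing_span_two_mul {q : ℤ} (hq : Prime q) (hodd : Odd q) :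
    IsSdfAbsorbing (Ideal.span {2 * q}) := by
  refine ⟨?_, fun a b _ _ hab => ?_⟩
  · rw [Ne, Ideal.span_singleton_eq_top]
    exact fun h => Int.prime_two.not_isUnit (isUnit_of_mul_isUnit_left h)
  simp only [Ideal.mem_span_singleton, sq_sub_sq] at hab ⊢
  have h2 : IsCoprime 2 q := Int.isCoprime_two_left.2 hodd
  have hsum : (2 : ℤ) ∣ a + b := by
    rcases Int.prime_two.dvd_mul.1 (dvd_of_mul_right_dvd hab) with h | h
    · exact h
    · exact (show a + b = a - b + 2 * b by ring) ▸ dvd_add h (dvd_mul_right 2 b)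
  have hdiff : (2 : ℤ) ∣ a - b :=
    (show a - b = a + b - 2 * b by ring) ▸ dvd_sub hsum (dvd_mul_right 2 b)
  exact (hq.dvd_mul.1 (dvd_of_mul_left_dvd hab)).imp (h2.mul_dvd hsum) (h2.mul_dvd hdiff)

theorem IsSdfAbsorbing.mem_or_mem_of_mul_mem {R : Type*} [CommRing R] {I : Ideal R}
    (hI : IsSdfAbsorbing I) {x y : R} (heven : Even (x + y)) (hne : x ≠ y) (hne' : x ≠ -y)
    (hxy : x * y ∈ I) : x ∈ I ∨ y ∈ I := by
  obtain ⟨a, ha⟩ := heven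
  have hsum : a + (x - a) = x := by ring
  have hdiff : a - (x - a) = y := by linear_combination -ha
  refine hsum ▸ hdiff ▸ hI.2 a (x - a) ?_ ?_ ?_
  · rintro rfl
    exact hne' (by linear_combination ha)
  · intro h
    exact hne (by linear_combination -ha + 2 * h)
  · rwa [sq_sub_sq, hsum, hdiff]

theorem Nat.exists_even_add_of_not_prime {n : ℕ} (hn : 2 ≤ n) (hp : ¬ n.Prime)
    (hq : ¬ ∃ q, q.Prime ∧ Odd q ∧ n = 2 * q) :
    ∃ d e, 0 < d ∧ d < n ∧ 0 < e ∧ e < n ∧ n ∣ d * e ∧ Even (d + e) := by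
  obtain ⟨m, rfl | rfl⟩ := Nat.even_or_odd' n
  · rcases Nat.even_or_odd m with hm | hm
    · have : m ≠ 1 := by rintro rfl; simp at hm
      exact ⟨2, m, by omega, by omega, by omega, by omega, dvd_rfl, even_two.add hm⟩
    · have hm1 : m ≠ 1 := by rintro rfl; exact hp Nat.prime_two
      have hmp : ¬ m.Prime := fun h => hq ⟨m, h, hm, rfl⟩
      obtain ⟨u, v, hu, hv, rfl⟩ := (Nat.not_prime_iff_exists_mul_eq (by omega)).1 hmp
      have : 0 < u := Nat.pos_of_ne_zero (by rintro rfl; omega)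
      have : 0 < v := Nat.pos_of_ne_zero (by rintro rfl; omega)
      refine ⟨2 * u, 2 * v, by omega, by nlinarith, by omega, by nlinarith, ⟨2, by ring⟩, ?_⟩
      exact ⟨u + v, by ring⟩
  · obtain ⟨d, e, hd, he, hde⟩ := (Nat.not_prime_iff_exists_mul_eq hn).1 hp
    have hodd : Odd (d * e) := hde ▸ odd_two_mul_add_one m
    refine ⟨d, e, Nat.pos_of_ne_zero ?_, hd, Nat.pos_of_ne_zero ?_, he, hde ▸ dvd_rfl, ?_⟩
    · rintro rfl; simp at hodd
    · rintro rfl; simp at hodd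
    · exact (Nat.odd_mul.1 hodd).1.add_odd (Nat.odd_mul.1 hodd).2

theorem not_isSdfAbsorbing_span_of_dvd_mul {n d e : ℕ} (hd0 : 0 < d) (hd : d < n) (he0 : 0 < e)
    (he : e < n) (hde : n ∣ d * e) (heven : Even (d + e)) :
    ¬ IsSdfAbsorbing (Ideal.span {(n : ℤ)}) := by
  intro hI
  -- Replacing `e` by `e + 2n` keeps its residue mod `n` and its parity, and rules out `d = ±e`.
  have hmul : ((d : ℤ) * (e + 2 * n)) ∈ Ideal.span {(n : ℤ)} := by
    rw [Ideal.mem_span_singleton, mul_add]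
    exact dvd_add (by exact_mod_cast hde) ⟨2 * d, by ring⟩
  have heven' : Even ((d : ℤ) + (e + 2 * n)) := by
    rw [← add_assoc]
    exact (by exact_mod_cast heven : Even ((d : ℤ) + e)).add (even_two_mul _)
  rcases hI.mem_or_mem_of_mul_mem heven' (by omega) (by omega) hmul with h | h
  · rw [Ideal.mem_span_singleton] at h
    exact Nat.not_dvd_of_pos_of_lt hd0 hd (by exact_mod_cast h)
  · rw [Ideal.mem_span_singleton, dvd_add_left (dvd_mul_left _ _)] at h
    exact Nat.not_dvd_of_pos_of_lt he0 he (by exact_mod_cast h)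

theorem isPrime_or_eq_span_two_mul_of_isSdfAbsorbing {I : Ideal ℤ} (hI : IsSdfAbsorbing I) :
    I.IsPrime ∨ ∃ q : ℤ, Prime q ∧ Odd q ∧ I = Ideal.span {2 * q} := by
  obtain ⟨g, rfl⟩ := IsPrincipalIdealRing.principal I
  rw [Ideal.submodule_span_eq, ← Int.span_natAbs] at hI ⊢
  set n := g.natAbs
  by_cases hn0 : n = 0
  · left
    simp [hn0, Ideal.isPrime_bot]
  by_cases hn1 : n = 1
  · exact absurd (by simp [hn1]) hI.1
  by_cases hp : n.Prime
  · exact Or.inl ((Ideal.span_singleton_prime (by exact_mod_cast hn0)).2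
      (Nat.prime_iff_prime_int.1 hp))
  by_cases hq : ∃ q, q.Prime ∧ Odd q ∧ n = 2 * q
  · obtain ⟨q, hq, hodd, hnq⟩ := hq
    refine Or.inr ⟨q, Nat.prime_iff_prime_int.1 hq, by exact_mod_cast hodd, ?_⟩
    rw [hnq, Nat.cast_mul, Nat.cast_two]
  obtain ⟨d, e, hd0, hd, he0, he, hde, heven⟩ :=
    Nat.exists_even_add_of_not_prime (by omega) hp hq
  exact absurd hI (not_isSdfAbsorbing_span_of_dvd_mul hd0 hd he0 he hde heven)

theorem stmt5_general (I : Ideal ℤ) :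
    IsSdfAbsorbing I ↔
      I.IsPrime ∨ ∃ q : ℤ, Prime q ∧ Odd q ∧ I = Ideal.span {2 * q} := by
  refine ⟨isPrime_or_eq_span_two_mul_of_isSdfAbsorbing, ?_⟩
  rintro (hI | ⟨q, hq, hodd, rfl⟩)
  · exact hI.isSdfAbsorbing
  · exact isSdfAbsorbing_span_two_mul hq hodd

theorem stmt5 (I : Ideal ℤ) (hIproper : I ≠ ⊤) :
    IsSdfAbsorbing I ↔
      I.IsPrime ∨ ∃ q : ℤ, Prime q ∧ Odd q ∧ I = Ideal.span {2 * q} :=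
  stmt5_general I
end

section
/- If f : R → T is an injective homomorphism of commutative rings and J is an sdf-absorbing ideal of T, then f⁻¹(J) is an sdf-absorbing ideal of R. -/
theorem stmt7_general {R T : Type*} [CommRing R] [CommRing T]
    (f : R →+* T) (hf : Function.Injective f) (J : Ideal T) (hJ : IsSdfAbsorbing J) :
    IsSdfAbsorbing (J.comap f) := by
  obtain ⟨hJ_ne_top, hJ_absorbs⟩ := hJ
  refine ⟨Ideal.comap_ne_top f hJ_ne_top, fun a b ha hb hab => ?_⟩
  have hfa : f a ≠ 0 := (map_ne_zero_iff f hf).mpr ha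
  have hfb : f b ≠ 0 := (map_ne_zero_iff f hf).mpr hb
  have hfab : f a ^ 2 - f b ^ 2 ∈ J := by simpa only [Ideal.mem_comap, map_sub, map_pow] using hab
  simpa only [Ideal.mem_comap, map_add, map_sub] using hJ_absorbs (f a) (f b) hfa hfb hfab

theorem stmt7 {R T : Type*} [CommRing R] [CommRing T] [Nontrivial R] [Nontrivial T]
    (f : R →+* T) (hf : Function.Injective f) (J : Ideal T) (hJ : IsSdfAbsorbing J) :
    IsSdfAbsorbing (J.comap f) :=
  stmt7_general f hf J hJ
end

section
/- If f : R → T is a surjective homomorphism of commutative rings and I is an sdf-absorbing ideal of R containing ker(f), then f(I) is an sdf-absorbing ideal of T. -/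
theorem IsSdfAbsorbing.of_comap {R T : Type*} [CommRing R] [CommRing T] {f : R →+* T}
    (hf : Function.Surjective f) {J : Ideal T} (hJ : IsSdfAbsorbing (J.comap f)) :
    IsSdfAbsorbing J := by
  obtain ⟨hne, habs⟩ := hJ
  refine ⟨fun htop => hne (by rw [htop, Ideal.comap_top]), fun a b ha hb hab => ?_⟩
  obtain ⟨x, rfl⟩ := hf a
  obtain ⟨y, rfl⟩ := hf b
  have hx : x ≠ 0 := by rintro rfl; exact ha (map_zero f)
  have hy : y ≠ 0 := by rintro rfl; exact hb (map_zero f)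
  have hxy : x ^ 2 - y ^ 2 ∈ J.comap f := by
    rwa [Ideal.mem_comap, map_sub, map_pow, map_pow]
  simpa only [Ideal.mem_comap, map_add, map_sub] using habs x y hx hy hxy

theorem stmt8_general {R T : Type*} [CommRing R] [CommRing T]
    (f : R →+* T) (hf : Function.Surjective f) (I : Ideal R)
    (hker : RingHom.ker f ≤ I) (hI : IsSdfAbsorbing I) :
    IsSdfAbsorbing (I.map f) := by
  have hcomap : (I.map f).comap f = I := by
    rw [Ideal.comap_map_of_surjective' f hf, sup_eq_left.mpr hker]
  exact IsSdfAbsorbing.of_comap hf (by rwa [hcomap])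

theorem stmt8 {R T : Type*} [CommRing R] [CommRing T] [Nontrivial R] [Nontrivial T]
    (f : R →+* T) (hf : Function.Surjective f) (I : Ideal R)
    (hker : RingHom.ker f ≤ I) (hI : IsSdfAbsorbing I) :
    IsSdfAbsorbing (I.map f) :=
  stmt8_general f hf I hker hI
end

section
/- Let R be a quasilocal commutative ring with maximal ideal M that is not a field. Then every nonzero proper ideal of R is sdf-absorbing if and only if M is the unique prime ideal of R, M is principal, and M² = {0}. -/
/-!
If `a ± b ∈ M` but `a² ≠ b²`, sdf-absorption of `((a + b)(a - b))` puts, say, `a + b` into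
`((a + b)(a - b))` with `a - b ∈ M`, and Nakayama forces `a + b = 0`, a contradiction. So
`a ± b ∈ M` implies `a² = b²`; for the pair `(x², x)` this gives `x² = x⁴`, hence `x² = 0` for
every `x ∈ M`. Then for a nonzero proper `I ∋ y ≠ 0` and `x ∈ M` we have `x² - y² = 0 ∈ I`, so
`x ± y ∈ I` and `x ∈ I`: every nonzero proper ideal is `M`, which gives the three conditions.
Conversely, if `M = (g)` and `M² = 0`, any nonzero `x ∈ M` is a unit multiple of `g`, so `M` is
the only nonzero proper ideal, and it is prime.
-/

open IsLocalRing

theorem Ideal.IsPrime.isSdfAbsorbing_s10 {R : Type*} [CommRing R] {P : Ideal R} (hP : P.IsPrime) :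
    IsSdfAbsorbing P :=
  ⟨hP.ne_top, fun a b _ _ hab => hP.mem_or_mem (by rwa [sq_sub_sq] at hab)⟩

namespace IsLocalRing

variable {R : Type*} [CommRing R] [IsLocalRing R]

theorem eq_zero_of_mem_span_singleton_mul {x y : R} (hy : y ∈ maximalIdeal R)
    (hx : x ∈ Ideal.span {x * y}) : x = 0 := by
  obtain ⟨r, hr⟩ := Ideal.mem_span_singleton'.mp hx
  have hunit : IsUnit (1 - y * r) :=
    isUnit_one_sub_self_of_mem_nonunits _ ((mem_maximalIdeal _).mp (Ideal.mul_mem_right r _ hy))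
  exact hunit.mul_left_eq_zero.mp (by linear_combination -hr)

theorem isPrincipal_maximalIdeal_of_forall_eq
    (h : ∀ I : Ideal R, I ≠ ⊥ → I ≠ ⊤ → I = maximalIdeal R) : (maximalIdeal R).IsPrincipal := by
  by_cases hM : maximalIdeal R = ⊥
  · rw [hM]; exact bot_isPrincipal
  · obtain ⟨m, hmM, hm0⟩ := Submodule.exists_mem_ne_zero_of_ne_bot hM
    refine ⟨⟨m, (h _ ?_ ?_).symm⟩⟩
    · rwa [Ne, Ideal.span_singleton_eq_bot]
    · rw [Ne, Ideal.span_singleton_eq_top]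
      exact (mem_maximalIdeal m).mp hmM

theorem eq_maximalIdeal_of_sq_eq_bot (hM : (maximalIdeal R).IsPrincipal)
    (hM2 : maximalIdeal R ^ 2 = ⊥) {I : Ideal R} (hI0 : I ≠ ⊥) (hI : I ≠ ⊤) :
    I = maximalIdeal R := by
  obtain ⟨g, hg⟩ := hM
  obtain ⟨x, hxI, hx0⟩ := Submodule.exists_mem_ne_zero_of_ne_bot hI0
  have hgM : g ∈ maximalIdeal R := hg ▸ Ideal.mem_span_singleton_self g
  obtain ⟨r, rfl⟩ := Ideal.mem_span_singleton'.mp (hg ▸ le_maximalIdeal hI hxI)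
  have hr : IsUnit r := by
    by_contra hr
    refine hx0 ((Submodule.mem_bot R).mp ?_)
    rw [← hM2, sq]
    exact Ideal.mul_mem_mul ((mem_maximalIdeal r).mpr hr) hgM
  refine le_antisymm (le_maximalIdeal hI) ?_
  rw [hg, Ideal.span_le, Set.singleton_subset_iff]
  exact (I.unit_mul_mem_iff_mem hr).mp hxI

section SdfAbsorbing

variable (H : ∀ I : Ideal R, I ≠ ⊥ → I ≠ ⊤ → IsSdfAbsorbing I)
include H

theorem sq_eq_sq_of_add_mem_of_sub_mem {a b : R} (ha : a ≠ 0) (hb : b ≠ 0)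
    (hp : a + b ∈ maximalIdeal R) (hq : a - b ∈ maximalIdeal R) : a ^ 2 = b ^ 2 := by
  by_contra hne
  have hc0 : (a + b) * (a - b) ≠ 0 := by rwa [← sq_sub_sq, sub_ne_zero]
  have hbot : Ideal.span {(a + b) * (a - b)} ≠ ⊥ := by rwa [Ne, Ideal.span_singleton_eq_bot]
  have htop : Ideal.span {(a + b) * (a - b)} ≠ ⊤ := by
    rw [Ne, Ideal.span_singleton_eq_top]
    exact (mem_maximalIdeal _).mp (Ideal.mul_mem_right _ _ hp)
  have hmem : a ^ 2 - b ^ 2 ∈ Ideal.span {(a + b) * (a - b)} := by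
    rw [sq_sub_sq]; exact Ideal.mem_span_singleton_self _
  rcases (H _ hbot htop).2 a b ha hb hmem with h | h
  · exact hc0 (by rw [eq_zero_of_mem_span_singleton_mul hq h, zero_mul])
  · rw [mul_comm] at h
    exact hc0 (by rw [eq_zero_of_mem_span_singleton_mul hp h, mul_zero])

theorem sq_eq_zero_of_mem_maximalIdeal {x : R} (hx : x ∈ maximalIdeal R) : x ^ 2 = 0 := by
  rcases eq_or_ne x 0 with rfl | hx0
  · exact zero_pow two_ne_zero
  by_contra hx2
  have hx2M : x ^ 2 ∈ maximalIdeal R := Ideal.pow_mem_of_mem _ hx 2 two_pos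
  have h4 : (x ^ 2) ^ 2 = x ^ 2 :=
    sq_eq_sq_of_add_mem_of_sub_mem H hx2 hx0 (add_mem hx2M hx) (sub_mem hx2M hx)
  refine hx2 (eq_zero_of_mem_span_singleton_mul hx2M ?_)
  rw [← sq, h4]
  exact Ideal.mem_span_singleton_self _

theorem eq_maximalIdeal_of_forall_isSdfAbsorbing {I : Ideal R} (hI0 : I ≠ ⊥) (hI : I ≠ ⊤) :
    I = maximalIdeal R := by
  refine le_antisymm (le_maximalIdeal hI) fun x hx => ?_
  obtain ⟨y, hyI, hy0⟩ := Submodule.exists_mem_ne_zero_of_ne_bot hI0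
  rcases eq_or_ne x 0 with rfl | hx0
  · exact I.zero_mem
  have hxy : x ^ 2 - y ^ 2 ∈ I := by
    rw [sq_eq_zero_of_mem_maximalIdeal H hx,
      sq_eq_zero_of_mem_maximalIdeal H (le_maximalIdeal hI hyI), sub_zero]
    exact I.zero_mem
  rcases (H I hI0 hI).2 x y hx0 hy0 hxy with h | h
  · simpa using I.sub_mem h hyI
  · simpa using I.add_mem h hyI

end SdfAbsorbing

end IsLocalRing

theorem stmt10_general {R : Type*} [CommRing R] [IsLocalRing R] :
    (∀ I : Ideal R, I ≠ ⊥ → I ≠ ⊤ → IsSdfAbsorbing I) ↔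
      ((∀ P : Ideal R, P.IsPrime → P = IsLocalRing.maximalIdeal R) ∧
        (IsLocalRing.maximalIdeal R).IsPrincipal ∧
        IsLocalRing.maximalIdeal R ^ 2 = ⊥) := by
  constructor
  · intro H
    have hsq := fun x (hx : x ∈ maximalIdeal R) => sq_eq_zero_of_mem_maximalIdeal H hx
    have hM := isPrincipal_maximalIdeal_of_forall_eq
      fun _ => eq_maximalIdeal_of_forall_isSdfAbsorbing H
    refine ⟨fun P hP => ?_, hM, ?_⟩
    · refine le_antisymm (le_maximalIdeal hP.ne_top) fun x hx => ?_
      exact hP.mem_of_pow_mem 2 (by rw [hsq x hx]; exact P.zero_mem)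
    · obtain ⟨m, hm⟩ := hM
      rw [hm, Ideal.span_singleton_pow, Ideal.span_singleton_eq_bot]
      exact hsq m (hm ▸ Ideal.mem_span_singleton_self m)
  · rintro ⟨-, hM, hM2⟩ I hI0 hI
    rw [eq_maximalIdeal_of_sq_eq_bot hM hM2 hI0 hI]
    exact (maximalIdeal.isMaximal R).isPrime.isSdfAbsorbing_s10

theorem stmt10 {R : Type*} [CommRing R] [IsLocalRing R] (hnf : ¬IsField R) :
    (∀ I : Ideal R, I ≠ ⊥ → I ≠ ⊤ → IsSdfAbsorbing I) ↔
      ((∀ P : Ideal R, P.IsPrime → P = IsLocalRing.maximalIdeal R) ∧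
        (IsLocalRing.maximalIdeal R).IsPrincipal ∧
        IsLocalRing.maximalIdeal R ^ 2 = ⊥) :=
  stmt10_general
end

section
/- Let F₁, F₂ be fields whose characteristics are both different from 2. Then the zero ideal of F₁ × F₂ is not an sdf-absorbing ideal. -/
theorem IsSdfAbsorbing.eq_neg_or_eq_of_sq_eq_sq {R : Type*} [CommRing R]
    (h : IsSdfAbsorbing (⊥ : Ideal R)) {a b : R} (ha : a ≠ 0) (hb : b ≠ 0)
    (hab : a ^ 2 = b ^ 2) : a = -b ∨ a = b := by
  simpa only [Ideal.mem_bot, sub_eq_zero, add_eq_zero_iff_eq_neg, hab, true_imp_iff]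
    using h.2 a b ha hb

/-- `(1, 1)` and `(1, -1)` have the same square, but their sum `(2, 0)` and their difference
`(0, 2)` are both nonzero. -/
theorem Prod.not_isSdfAbsorbing_bot {R S : Type*} [CommRing R] [CommRing S]
    (hR : (2 : R) ≠ 0) (hS : (2 : S) ≠ 0) : ¬IsSdfAbsorbing (⊥ : Ideal (R × S)) := by
  intro h
  have : Nontrivial R := ⟨⟨2, 0, hR⟩⟩
  rcases h.eq_neg_or_eq_of_sq_eq_sq (a := (1, 1)) (b := (1, -1)) (by simp [Prod.ext_iff])
    (by simp) (by simp) with hneg | heq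
  · rw [Prod.neg_mk, neg_neg, Prod.mk.injEq] at hneg
    exact hR (by linear_combination hneg.1)
  · rw [Prod.mk.injEq] at heq
    exact hS (by linear_combination heq.2)

theorem stmt12 {F₁ F₂ : Type*} [Field F₁] [Field F₂]
    (h1 : ringChar F₁ ≠ 2) (h2 : ringChar F₂ ≠ 2) :
    ¬IsSdfAbsorbing (⊥ : Ideal (F₁ × F₂)) :=
  Prod.not_isSdfAbsorbing_bot (Ring.two_ne_zero h1) (Ring.two_ne_zero h2)
end

section
/- Let I = P₁ ∩ ⋯ ∩ Pₙ for distinct pairwise comaximal prime ideals P₁, …, Pₙ of a commutative ring R. If I is an sdf-absorbing ideal of R, then at most one of the Pᵢ has char(R/Pᵢ) ≠ 2. -/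
open Function

section

variable {R : Type*} [CommRing R]

theorem IsSdfAbsorbing.add_one_mem_or_sub_one_mem {I : Ideal R} (hI : IsSdfAbsorbing I)
    {a : R} (ha : a ^ 2 - 1 ∈ I) : a + 1 ∈ I ∨ a - 1 ∈ I := by
  have h1 : (1 : R) ≠ 0 := fun h ↦ hI.1 <| I.eq_top_iff_one.mpr (h ▸ I.zero_mem)
  by_cases ha0 : a = 0
  · subst ha0
    exact (hI.1 (I.eq_top_of_isUnit_mem ha (by simp))).elim
  · simpa using hI.2 a 1 ha0 h1 (by simpa using ha)

theorem IsSdfAbsorbing.two_mem_or_two_mem_of_iInf {ι : Type*} [Finite ι] {P : ι → Ideal R}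
    (hcop : Pairwise (IsCoprime on P)) (hI : IsSdfAbsorbing (⨅ k, P k)) {i j : ι}
    (hij : i ≠ j) : (2 : R) ∈ P i ∨ (2 : R) ∈ P j := by
  classical
  obtain ⟨a, ha⟩ := Ideal.exists_forall_sub_mem_ideal hcop fun k ↦ if k = j then -1 else 1
  have hadd : a + 1 ∈ P j := by simpa using ha j
  have hsub : ∀ k, k ≠ j → a - 1 ∈ P k := fun k hk ↦ by simpa [hk] using ha k
  have hsq : a ^ 2 - 1 ∈ ⨅ k, P k := by
    refine Ideal.mem_iInf.mpr fun k ↦ ?_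
    rw [show a ^ 2 - 1 = (a - 1) * (a + 1) by ring]
    by_cases hkj : k = j
    · exact hkj ▸ Ideal.mul_mem_left _ _ hadd
    · exact Ideal.mul_mem_right _ _ (hsub k hkj)
  have two_eq : (2 : R) = (a + 1) - (a - 1) := by ring
  rcases hI.add_one_mem_or_sub_one_mem hsq with h | h
  · exact .inl (two_eq ▸ sub_mem (Ideal.mem_iInf.mp h i) (hsub i hij))
  · exact .inr (two_eq ▸ sub_mem hadd (Ideal.mem_iInf.mp h j))

theorem Ideal.ringChar_quotient_eq_two {P : Ideal R} (hP : P ≠ ⊤) (h2 : (2 : R) ∈ P) :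
    ringChar (R ⧸ P) = 2 := by
  have : Nontrivial (R ⧸ P) := Ideal.Quotient.nontrivial_iff.mpr hP
  refine CharP.ringChar_of_prime_eq_zero Nat.prime_two ?_
  simpa [map_ofNat] using Ideal.Quotient.eq_zero_iff_mem.mpr h2

end

theorem stmt13_general {R : Type*} [CommRing R] {n : ℕ}
    (P : Fin n → Ideal R) (hprime : ∀ i, (P i).IsPrime)
    (hcomax : ∀ i j, i ≠ j → P i ⊔ P j = ⊤)
    (hI : IsSdfAbsorbing (⨅ i, P i)) :
    ∀ i j : Fin n, ringChar (R ⧸ P i) ≠ 2 → ringChar (R ⧸ P j) ≠ 2 → i = j := by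
  intro i j hi hj
  by_contra hij
  have hcop : Pairwise (IsCoprime on P) := fun k l hkl ↦
    Ideal.isCoprime_iff_sup_eq.mpr (hcomax k l hkl)
  rcases hI.two_mem_or_two_mem_of_iInf hcop hij with h2 | h2
  · exact hi (Ideal.ringChar_quotient_eq_two (hprime i).ne_top h2)
  · exact hj (Ideal.ringChar_quotient_eq_two (hprime j).ne_top h2)

theorem stmt13 {R : Type*} [CommRing R] [Nontrivial R] {n : ℕ}
    (P : Fin n → Ideal R) (hprime : ∀ i, (P i).IsPrime)
    (hdist : Function.Injective P)
    (hcomax : ∀ i j, i ≠ j → P i ⊔ P j = ⊤)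
    (hI : IsSdfAbsorbing (⨅ i, P i)) :
    ∀ i j : Fin n, ringChar (R ⧸ P i) ≠ 2 → ringChar (R ⧸ P j) ≠ 2 → i = j :=
  stmt13_general P hprime hcomax hI
end

section
/- Let R be a commutative ring. Then the ideal (X) of R[X] is an sdf-absorbing ideal of R[X] if and only if R is reduced and the zero ideal of R is sdf-absorbing. -/
/-!
`(X)` is the kernel of the constant-coefficient map `R[X] → R`, and the equivalence holds for
the kernel of any surjective ring map `φ : A → B` with `ker φ ≠ 0`. If `B` is reduced and `0`
is sdf-absorbing in `B`, then `φ f ^ 2 = φ g ^ 2` forces `φ f` and `φ g` to vanish together,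
and otherwise they are nonzero and the hypothesis on `B` applies.
Conversely, a nonzero `x ∈ ker φ` and a lift `a` of a square-zero `r` give
`(a + x) ^ 2 - x ^ 2 ∈ ker φ` with `a + x ≠ 0`, so `r = φ (a + x ± x) = 0`.
-/

section Kernel

variable {A B : Type*} [CommRing A] [CommRing B] {φ : A →+* B}

theorem IsSdfAbsorbing.isReduced_of_ker (h : IsSdfAbsorbing (RingHom.ker φ))
    (hφ : Function.Surjective φ) (hker : RingHom.ker φ ≠ ⊥) : IsReduced B := by
  refine (isReduced_iff_pow_one_lt 2 one_lt_two).2 fun r hr => ?_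
  by_contra hr0
  obtain ⟨x, hx, hx0⟩ := Submodule.exists_mem_ne_zero_of_ne_bot hker
  rw [RingHom.mem_ker] at hx
  obtain ⟨a, rfl⟩ := hφ r
  have hax : a + x ≠ 0 := fun hax => hr0 <| by simpa [hx] using congrArg φ hax
  have hsq : (a + x) ^ 2 - x ^ 2 ∈ RingHom.ker φ := by simp [hx, hr]
  rcases h.2 _ _ hax hx0 hsq with hmem | hmem <;> simp [hx] at hmem <;> exact hr0 hmem

theorem IsSdfAbsorbing.bot_of_ker [Nontrivial B] (h : IsSdfAbsorbing (RingHom.ker φ))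
    (hφ : Function.Surjective φ) : IsSdfAbsorbing (⊥ : Ideal B) := by
  refine ⟨bot_ne_top, fun a b ha hb hab => ?_⟩
  obtain ⟨a, rfl⟩ := hφ a
  obtain ⟨b, rfl⟩ := hφ b
  have hmem : a ^ 2 - b ^ 2 ∈ RingHom.ker φ := by simpa using hab
  simpa using h.2 a b (ne_zero_of_map ha) (ne_zero_of_map hb) hmem

theorem IsSdfAbsorbing.ker [Nontrivial B] [IsReduced B] (h : IsSdfAbsorbing (⊥ : Ideal B)) :
    IsSdfAbsorbing (RingHom.ker φ) := by
  refine ⟨RingHom.ker_ne_top φ, fun f g hf hg hfg => ?_⟩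
  rw [RingHom.mem_ker, map_sub, map_pow, map_pow, sub_eq_zero] at hfg
  have hzero : φ f = 0 ↔ φ g = 0 := by
    rw [← pow_eq_zero_iff two_ne_zero, hfg, pow_eq_zero_iff two_ne_zero]
  by_cases hf0 : φ f = 0
  · exact Or.inl <| by simp [hf0, hzero.1 hf0]
  · simpa using h.2 _ _ hf0 (mt hzero.2 hf0) (by simp [hfg])

theorem isSdfAbsorbing_ker_iff [Nontrivial B] (hφ : Function.Surjective φ)
    (hker : RingHom.ker φ ≠ ⊥) :
    IsSdfAbsorbing (RingHom.ker φ) ↔ IsReduced B ∧ IsSdfAbsorbing (⊥ : Ideal B) :=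
  ⟨fun h => ⟨h.isReduced_of_ker hφ hker, h.bot_of_ker hφ⟩, fun ⟨_, h⟩ => h.ker⟩

end Kernel

theorem stmt15 {R : Type*} [CommRing R] [Nontrivial R] :
    IsSdfAbsorbing (Ideal.span {(Polynomial.X : Polynomial R)}) ↔
      IsReduced R ∧ IsSdfAbsorbing (⊥ : Ideal R) := by
  rw [← Polynomial.ker_constantCoeff]
  refine isSdfAbsorbing_ker_iff Polynomial.constantCoeff_surjective ?_
  rw [Polynomial.ker_constantCoeff, Ne, Ideal.span_singleton_eq_bot]
  exact Polynomial.X_ne_zero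
end

section
/- The zero ideal of ℤ_n is an sdf-absorbing ideal if and only if n = 4, n = 9, n is prime, or n = 2p for some odd prime p. -/
section

variable {R S : Type*} [CommRing R] [CommRing S]

theorem isSdfAbsorbing_bot_iff [Nontrivial R] :
    IsSdfAbsorbing (⊥ : Ideal R) ↔
      ∀ a b : R, a ≠ 0 → b ≠ 0 → a ^ 2 = b ^ 2 → a = b ∨ a = -b := by
  simp only [IsSdfAbsorbing, Ideal.mem_bot, sub_eq_zero, add_eq_zero_iff_eq_neg, ne_eq,
    bot_ne_top, not_false_eq_true, true_and, or_comm]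

theorem IsSdfAbsorbing.comap {J : Ideal S} (hJ : IsSdfAbsorbing J) {f : R →+* S}
    (hf : Function.Injective f) : IsSdfAbsorbing (J.comap f) := by
  refine ⟨fun htop => hJ.1 (Ideal.eq_top_of_isUnit_mem _ ?_ isUnit_one), fun a b ha hb hab => ?_⟩
  · simpa using (Ideal.comap_eq_top_iff.mp htop ▸ Submodule.mem_top : (1 : R) ∈ J.comap f)
  · simpa using hJ.2 (f a) (f b) ((map_ne_zero_iff f hf).mpr ha) ((map_ne_zero_iff f hf).mpr hb)
      (by simpa using hab)

theorem IsSdfAbsorbing.bot_of_injective (h : IsSdfAbsorbing (⊥ : Ideal S)) (f : R →+* S)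
    (hf : Function.Injective f) : IsSdfAbsorbing (⊥ : Ideal R) := by
  simpa [Ideal.comap_bot_of_injective f hf] using h.comap hf

theorem isSdfAbsorbing_bot_of_isDomain [IsDomain R] : IsSdfAbsorbing (⊥ : Ideal R) :=
  isSdfAbsorbing_bot_iff.mpr fun _ _ _ _ => sq_eq_sq_iff_eq_or_eq_neg.mp

theorem isSdfAbsorbing_bot_prod [IsReduced R] [CharP R 2] [IsDomain S] :
    IsSdfAbsorbing (⊥ : Ideal (R × S)) := by
  refine isSdfAbsorbing_bot_iff.mpr fun a b _ _ hab => ?_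
  have h₁ : a.1 = b.1 := frobenius_inj R 2 (by simpa [frobenius_def] using congrArg Prod.fst hab)
  rcases sq_eq_sq_iff_eq_or_eq_neg.mp (congrArg Prod.snd hab : a.2 ^ 2 = b.2 ^ 2) with h₂ | h₂
  · exact Or.inl (Prod.ext h₁ h₂)
  · exact Or.inr (Prod.ext (by simpa [CharTwo.neg_eq] using h₁) h₂)

theorem not_isSdfAbsorbing_bot_of_sq_eq_sq {a b : R} (ha : a ≠ 0) (hb : b ≠ 0)
    (hab : a ^ 2 = b ^ 2) (h₁ : a ≠ b) (h₂ : a ≠ -b) : ¬ IsSdfAbsorbing (⊥ : Ideal R) := by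
  have : Nontrivial R := ⟨⟨a, 0, ha⟩⟩
  rw [isSdfAbsorbing_bot_iff]
  exact fun h => (h a b ha hb hab).elim h₁ h₂

theorem not_isSdfAbsorbing_bot_prod (hR : (2 : R) ≠ 0) (hS : (2 : S) ≠ 0) :
    ¬ IsSdfAbsorbing (⊥ : Ideal (R × S)) := by
  have : Nontrivial R := ⟨⟨2, 0, hR⟩⟩
  have h₁ : (1 : R) ≠ -1 := fun h => hR (by linear_combination h)
  have h₂ : (1 : S) ≠ -1 := fun h => hS (by linear_combination h)
  refine not_isSdfAbsorbing_bot_of_sq_eq_sq (a := 1) (b := (1, -1)) one_ne_zero ?_ ?_ ?_ ?_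
  · simp [Prod.ext_iff]
  · ext <;> simp
  · simpa [Prod.ext_iff] using h₂
  · simpa [Prod.ext_iff] using h₁

end

namespace ZMod

theorem natCast_ne_zero_of_lt {n m : ℕ} (hm : 0 < m) (hmn : m < n) : (m : ZMod n) ≠ 0 := by
  rw [Ne, natCast_eq_zero_iff]
  exact fun h => absurd (Nat.le_of_dvd hm h) (by omega)

theorem not_isSdfAbsorbing_bot_mul_of_coprime {u v : ℕ} (huv : u.Coprime v) (hu : 3 ≤ u)
    (hv : 3 ≤ v) : ¬ IsSdfAbsorbing (⊥ : Ideal (ZMod (u * v))) :=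
  fun h => not_isSdfAbsorbing_bot_prod
    (by exact_mod_cast natCast_ne_zero_of_lt two_pos (by omega : 2 < u))
    (by exact_mod_cast natCast_ne_zero_of_lt two_pos (by omega : 2 < v))
    (h.bot_of_injective (chineseRemainder huv).symm.toRingHom (chineseRemainder huv).symm.injective)

-- `a = x` and `b = x + t`, with `b ^ 2 - a ^ 2 = 2 * x * t + t ^ 2` a multiple of `p * t`
theorem not_isSdfAbsorbing_bot_mul {p t x : ℕ} (hpt : p ∣ t) (hpx : p ∣ 2 * x) (hx : 0 < x)
    (hlt : 2 * x + t < p * t) : ¬ IsSdfAbsorbing (⊥ : Ideal (ZMod (p * t))) := by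
  have ht : 0 < t := Nat.pos_of_ne_zero (by rintro rfl; simp at hlt)
  have hsq : ((2 * x * t + t ^ 2 : ℕ) : ZMod (p * t)) = 0 := by
    rw [natCast_eq_zero_iff]
    exact dvd_add (mul_dvd_mul_right hpx t) (sq t ▸ mul_dvd_mul_right hpt t)
  refine not_isSdfAbsorbing_bot_of_sq_eq_sq (a := (x : ZMod (p * t))) (b := ((x + t : ℕ) : _))
    (natCast_ne_zero_of_lt (n := p * t) hx (by omega))
    (natCast_ne_zero_of_lt (n := p * t) (by omega) (by omega))
    ?_ ?_ ?_
  · push_cast at hsq ⊢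
    linear_combination -hsq
  · intro h
    refine natCast_ne_zero_of_lt (n := p * t) (m := t) (by omega) (by omega) ?_
    push_cast at h
    linear_combination -h
  · intro h
    refine natCast_ne_zero_of_lt (n := p * t) (m := 2 * x + t) (by omega) (by omega) ?_
    push_cast at h ⊢
    linear_combination h

theorem not_isSdfAbsorbing_bot_of_four_dvd {n : ℕ} (h4 : 4 ∣ n) (hn : 4 < n) :
    ¬ IsSdfAbsorbing (⊥ : Ideal (ZMod n)) := by
  obtain ⟨s, rfl⟩ := h4
  have := not_isSdfAbsorbing_bot_mul (p := 2) (t := 2 * s) (x := 1) (dvd_mul_right 2 s)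
    (dvd_mul_right 2 1) one_pos (by omega)
  rwa [← mul_assoc] at this

theorem not_isSdfAbsorbing_bot_of_sq_dvd {p n : ℕ} (hp3 : 3 ≤ p) (hpn : p ^ 2 ∣ n) (hn : n ≠ 0)
    (h9 : n ≠ 9) : ¬ IsSdfAbsorbing (⊥ : Ideal (ZMod n)) := by
  obtain ⟨s, rfl⟩ := hpn
  have hs : 0 < s := Nat.pos_of_ne_zero (by rintro rfl; simp at hn)
  have hlt : 2 * p + p * s < p * (p * s) := by
    rcases Nat.lt_or_ge s 2 with hs1 | hs2
    · obtain rfl : s = 1 := by omega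
      have : p ≠ 3 := by rintro rfl; norm_num at h9
      have hp4 : 4 ≤ p := by omega
      nlinarith
    · nlinarith [Nat.mul_le_mul hp3 (le_refl (p * s)), Nat.mul_le_mul_left p hs2]
  have := not_isSdfAbsorbing_bot_mul (dvd_mul_right p s) (dvd_mul_left p 2) (by omega) hlt
  rwa [← mul_assoc, ← sq] at this

theorem not_isSdfAbsorbing_bot {n : ℕ} (hn : 2 ≤ n) (h4 : n ≠ 4) (h9 : n ≠ 9) (hn_prime : ¬ n.Prime)
    (h2p : ∀ p : ℕ, p.Prime → Odd p → n ≠ 2 * p) : ¬ IsSdfAbsorbing (⊥ : Ideal (ZMod n)) := by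
  have hn0 : n ≠ 0 := by omega
  by_cases hodd : ∃ p, p.Prime ∧ Odd p ∧ p ∣ n
  · obtain ⟨p, hp, hpodd, hpn⟩ := hodd
    have hp3 : 3 ≤ p := by
      have : p ≠ 2 := by rintro rfl; exact absurd hpodd (by decide)
      have := hp.two_le; omega
    obtain ⟨k, r, hsplit, hcop, hk⟩ : ∃ k r, p ^ k * r = n ∧ p.Coprime r ∧ 1 ≤ k :=
      ⟨_, _, Nat.ordProj_mul_ordCompl_eq_self n p, Nat.coprime_ordCompl hp hn0,
        hp.factorization_pos_of_dvd hn0 hpn⟩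
    by_cases hr : 3 ≤ r
    · rw [← hsplit]
      exact not_isSdfAbsorbing_bot_mul_of_coprime (hcop.pow_left k)
        (hp3.trans (Nat.le_self_pow (by omega) p)) hr
    -- otherwise `n` is `p ^ k` or `2 * p ^ k`, and `k ≥ 2` since `n` is neither `p` nor `2 * p`
    have hk2 : 2 ≤ k := by
      by_contra hk1
      obtain rfl : k = 1 := by omega
      rw [pow_one] at hsplit
      obtain rfl | rfl | rfl : r = 0 ∨ r = 1 ∨ r = 2 := by omega
      · omega
      · exact hn_prime (by rwa [← hsplit, mul_one])
      · exact h2p p hp hpodd (by rw [← hsplit, mul_comm])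
    exact not_isSdfAbsorbing_bot_of_sq_dvd hp3
      (hsplit ▸ (pow_dvd_pow p hk2).trans (dvd_mul_right _ r)) hn0 h9
  · push Not at hodd
    have h2dvd : ∀ m, m ∣ n → m ≠ 1 → 2 ∣ m := fun m hm hm1 =>
      (Nat.minFac_prime hm1).eq_two_or_odd'.elim (fun h => h ▸ Nat.minFac_dvd m)
        fun h => absurd ((Nat.minFac_dvd m).trans hm) (hodd _ (Nat.minFac_prime hm1) h)
    obtain ⟨m, rfl⟩ := h2dvd n dvd_rfl (by omega)
    have hm1 : m ≠ 1 := by rintro rfl; exact hn_prime Nat.prime_two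
    obtain ⟨l, rfl⟩ := h2dvd m (dvd_mul_left m 2) hm1
    exact not_isSdfAbsorbing_bot_of_four_dvd ⟨l, by ring⟩ (by omega)

theorem isSdfAbsorbing_bot_two_mul {p : ℕ} (hp : p.Prime) (hodd : Odd p) :
    IsSdfAbsorbing (⊥ : Ideal (ZMod (2 * p))) :=
  have : Fact p.Prime := ⟨hp⟩
  isSdfAbsorbing_bot_prod.bot_of_injective
    (chineseRemainder (Nat.coprime_two_left.mpr hodd)).toRingHom
    (chineseRemainder (Nat.coprime_two_left.mpr hodd)).injective

end ZMod

theorem stmt16 (n : ℕ) (hn : 2 ≤ n) :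
    IsSdfAbsorbing (⊥ : Ideal (ZMod n)) ↔
      n = 4 ∨ n = 9 ∨ n.Prime ∨ ∃ p : ℕ, p.Prime ∧ Odd p ∧ n = 2 * p := by
  have : Fact (1 < n) := ⟨hn⟩
  constructor
  · contrapose!
    rintro ⟨h4, h9, hn_prime, h2p⟩
    exact ZMod.not_isSdfAbsorbing_bot hn h4 h9 hn_prime h2p
  · rintro (rfl | rfl | hp | ⟨p, hp, hodd, rfl⟩)
    · exact isSdfAbsorbing_bot_iff.mpr (by decide)
    · exact isSdfAbsorbing_bot_iff.mpr (by decide)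
    · have : Fact n.Prime := ⟨hp⟩
      exact isSdfAbsorbing_bot_of_isDomain
    · exact ZMod.isSdfAbsorbing_bot_two_mul hp hodd
end

section
/- Let I be a weakly sdf-absorbing ideal of a commutative ring R that is not an sdf-absorbing ideal. Then I ⊆ nil(R). -/
/-- A proper ideal `I` is weakly sdf-absorbing if whenever `0 ≠ a^2 - b^2 ∈ I`
for nonzero `a, b`, then `a + b ∈ I` or `a - b ∈ I`. -/
def IsWeaklySdfAbsorbing {R : Type*} [CommRing R] (I : Ideal R) : Prop :=
  I ≠ ⊤ ∧ ∀ a b : R, a ≠ 0 → b ≠ 0 → a ^ 2 - b ^ 2 ≠ 0 → a ^ 2 - b ^ 2 ∈ I →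
    a + b ∈ I ∨ a - b ∈ I

/-!
If `I` is weakly sdf-absorbing but not sdf-absorbing, there are nonzero `a, b` with `a ^ 2 = b ^ 2`
and `a ± b ∉ I`. For `c ∈ I` we have `(a + c) ^ 2 - b ^ 2 = c * (2 * a + c) ∈ I`, and `a + c ± b ∈ I`
would force `a ± b ∈ I`; so `a + c = 0` or `c * (2 * a + c) = 0`. Applied to `c` and `-c` this gives
`c ^ 3 = 0` unless `c = ± a`. Since `a` and `b` play symmetric roles and `a, b` cannot both lie in `I`,
every element of `I` has zero cube.
-/

namespace IsWeaklySdfAbsorbing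

variable {R : Type*} [CommRing R] {I : Ideal R}

theorem exists_sq_eq_sq_of_not_isSdfAbsorbing (hw : IsWeaklySdfAbsorbing I)
    (hns : ¬IsSdfAbsorbing I) :
    ∃ a b : R, a ≠ 0 ∧ b ≠ 0 ∧ a ^ 2 = b ^ 2 ∧ a + b ∉ I ∧ a - b ∉ I := by
  simp only [IsSdfAbsorbing, not_and, not_forall, not_or] at hns
  obtain ⟨a, b, ha, hb, hmem, hplus, hminus⟩ := hns hw.1
  refine ⟨a, b, ha, hb, ?_, hplus, hminus⟩
  by_contra hne
  exact (hw.2 a b ha hb (sub_ne_zero.mpr hne) hmem).elim hplus hminus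

variable {a b : R}

theorem add_eq_zero_or_mul_eq_zero (hw : IsWeaklySdfAbsorbing I) (hb : b ≠ 0)
    (hab : a ^ 2 = b ^ 2) (hplus : a + b ∉ I) (hminus : a - b ∉ I) {c : R} (hc : c ∈ I) :
    a + c = 0 ∨ c * (2 * a + c) = 0 := by
  by_contra! ⟨hac, hne⟩
  have hdiff : (a + c) ^ 2 - b ^ 2 = c * (2 * a + c) := by linear_combination hab
  rcases hw.2 (a + c) b hac hb (hdiff ▸ hne) (hdiff ▸ I.mul_mem_right _ hc) with h | h
  · exact hplus (by convert I.sub_mem h hc using 1; ring)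
  · exact hminus (by convert I.sub_mem h hc using 1; ring)

theorem pow_three_eq_zero_of_ne (hw : IsWeaklySdfAbsorbing I) (hb : b ≠ 0)
    (hab : a ^ 2 = b ^ 2) (hplus : a + b ∉ I) (hminus : a - b ∉ I) {c : R} (hc : c ∈ I)
    (hca : c ≠ a) (hcna : c ≠ -a) : c ^ 3 = 0 := by
  have hpos := (hw.add_eq_zero_or_mul_eq_zero hb hab hplus hminus hc).resolve_left
    fun h ↦ hcna (by linear_combination h)
  have hneg := (hw.add_eq_zero_or_mul_eq_zero hb hab hplus hminus (I.neg_mem hc)).resolve_left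
    fun h ↦ hca (by linear_combination -h)
  linear_combination (c - a) * hpos - a * hneg

end IsWeaklySdfAbsorbing

theorem stmt18_general {R : Type*} [CommRing R] (I : Ideal R)
    (hw : IsWeaklySdfAbsorbing I) (hns : ¬IsSdfAbsorbing I) :
    I ≤ nilradical R := by
  obtain ⟨a, b, ha, hb, hab, hplus, hminus⟩ := hw.exists_sq_eq_sq_of_not_isSdfAbsorbing hns
  intro x hx
  refine ⟨3, ?_⟩
  by_cases hxa : x = a ∨ x = -a
  · have haI : a ∈ I := by rcases hxa with rfl | rfl <;> simpa using hx
    have hbI : b ∉ I := fun hbI ↦ hplus (I.add_mem haI hbI)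
    have hminus' : b - a ∉ I := by rwa [← neg_sub, I.neg_mem_iff]
    refine hw.pow_three_eq_zero_of_ne ha hab.symm (by rwa [add_comm]) hminus' hx ?_ ?_
    · rintro rfl; exact hbI hx
    · rintro rfl; exact hbI (by simpa using hx)
  · obtain ⟨hxa, hxna⟩ := not_or.mp hxa
    exact hw.pow_three_eq_zero_of_ne hb hab hplus hminus hx hxa hxna

theorem stmt18 {R : Type*} [CommRing R] [Nontrivial R] (I : Ideal R)
    (hw : IsWeaklySdfAbsorbing I) (hns : ¬IsSdfAbsorbing I) :
    I ≤ nilradical R :=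
  stmt18_general I hw hns
end

section
/- Let I be a weakly sdf-absorbing ideal of a reduced commutative ring R that is not an sdf-absorbing ideal. Then I = {0}. -/
section

variable {R : Type*} [CommRing R] {I : Ideal R} {a b x : R}

structure IsSdfCounterexample (I : Ideal R) (a b : R) : Prop where
  left_ne_zero : a ≠ 0
  right_ne_zero : b ≠ 0
  sq_sub_sq_mem : a ^ 2 - b ^ 2 ∈ I
  add_notMem : a + b ∉ I
  sub_notMem : a - b ∉ I

theorem IsSdfCounterexample.symm (h : IsSdfCounterexample I a b) : IsSdfCounterexample I b a where
  left_ne_zero := h.right_ne_zero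
  right_ne_zero := h.left_ne_zero
  sq_sub_sq_mem := by
    rw [← neg_sub, I.neg_mem_iff]
    exact h.sq_sub_sq_mem
  add_notMem := by
    rw [add_comm]
    exact h.add_notMem
  sub_notMem := by
    rw [← neg_sub, I.neg_mem_iff]
    exact h.sub_notMem

theorem exists_isSdfCounterexample (hI : I ≠ ⊤) (h : ¬IsSdfAbsorbing I) :
    ∃ a b, IsSdfCounterexample I a b := by
  simp only [IsSdfAbsorbing, not_and, not_forall, not_or] at h
  obtain ⟨a, b, ha, hb, hmem, hadd, hsub⟩ := h hI
  exact ⟨a, b, ha, hb, hmem, hadd, hsub⟩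

namespace IsWeaklySdfAbsorbing

variable (hw : IsWeaklySdfAbsorbing I) (h : IsSdfCounterexample I a b)
include hw h

theorem sq_eq_sq_of_isSdfCounterexample : a ^ 2 = b ^ 2 := by
  by_contra hne
  rcases hw.2 a b h.left_ne_zero h.right_ne_zero (sub_ne_zero.mpr hne) h.sq_sub_sq_mem with
    hadd | hsub
  · exact h.add_notMem hadd
  · exact h.sub_notMem hsub

theorem mul_two_mul_add_eq_zero (hx : x ∈ I) (hax : a + x ≠ 0) : x * (2 * a + x) = 0 := by
  have hsq := hw.sq_eq_sq_of_isSdfCounterexample h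
  have hdiff : (a + x) ^ 2 - b ^ 2 = x * (2 * a + x) := by linear_combination hsq
  by_contra hne
  have hmem : (a + x) ^ 2 - b ^ 2 ∈ I := hdiff ▸ I.mul_mem_right _ hx
  rcases hw.2 (a + x) b hax h.right_ne_zero (hdiff ▸ hne) hmem with hadd | hsub
  · exact h.add_notMem (by convert I.sub_mem hadd hx using 1; ring)
  · exact h.sub_notMem (by convert I.sub_mem hsub hx using 1; ring)

theorem eq_zero_of_mem [IsReduced R] (hx : x ∈ I) (hax : a + x ≠ 0) (hax' : a - x ≠ 0) :
    x = 0 := by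
  have hplus := hw.mul_two_mul_add_eq_zero h hx hax
  have hminus := hw.mul_two_mul_add_eq_zero h (I.neg_mem hx) (by rwa [← sub_eq_add_neg])
  have hcube : x ^ 3 = 0 := by linear_combination (x - a) * hplus - a * hminus
  exact pow_eq_zero_iff three_ne_zero |>.mp hcube

theorem left_mem [IsReduced R] (hx : x ∈ I) (hx0 : x ≠ 0) : a ∈ I := by
  by_contra ha
  refine hx0 (hw.eq_zero_of_mem h hx (fun hax => ha ?_) (fun hax => ha ?_))
  · rw [eq_neg_of_add_eq_zero_left hax]
    exact I.neg_mem hx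
  · rwa [sub_eq_zero.mp hax]

end IsWeaklySdfAbsorbing

end

theorem stmt19_general {R : Type*} [CommRing R] [IsReduced R] (I : Ideal R)
    (hw : IsWeaklySdfAbsorbing I) (hns : ¬IsSdfAbsorbing I) :
    I = ⊥ := by
  obtain ⟨a, b, h⟩ := exists_isSdfCounterexample hw.1 hns
  by_contra hne
  obtain ⟨x, hx, hx0⟩ := Submodule.ne_bot_iff I |>.mp hne
  exact h.add_notMem (I.add_mem (hw.left_mem h hx hx0) (hw.left_mem h.symm hx hx0))

theorem stmt19 {R : Type*} [CommRing R] [Nontrivial R] [IsReduced R] (I : Ideal R)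
    (hw : IsWeaklySdfAbsorbing I) (hns : ¬IsSdfAbsorbing I) :
    I = ⊥ :=
  stmt19_general I hw hns
end
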